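/- Let 0 < p < 1, λ > 0, and m > 1. Then there exists a constant C > 0 such that for all t ≥ 0, ∫₀ᵗ e^{−λ(t^p − τ^p)} (1+τ)^{−m} dτ ≤ C (1+t)^{−m − p + 1}. -/

import Mathlib

/-!
By concavity of `x ↦ x ^ p`, `t ^ p - τ ^ p ≥ a (t - τ)` for `0 ≤ τ ≤ t` with
`a = λ p (1 + t) ^ (p - 1)`, so the integral is at most the convolution of `(1 + τ) ^ (-m)` with
the exponential kernel `e^{-a (t - τ)}`. Split it at `t / 2`. On `[0, t / 2]` the kernel is at most
`e^{-a t / 2}` and `(1 + τ) ^ (-m)` has integral at most `1 / (m - 1)`; as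
`a t ≥ λ p ((1 + t) ^ p - 1)`, this factor decays faster than any power of `1 + t`.
On `[t / 2, t]` we have `(1 + τ) ^ (-m) ≤ 2 ^ m (1 + t) ^ (-m)` and the kernel has integral at
most `1 / a`, which is a constant times `(1 + t) ^ (1 - p)`.
-/

open Real intervalIntegral

lemma exp_neg_le_div_rpow {y r : ℝ} (hy : 0 < y) (hr : 0 < r) : exp (-y) ≤ (r / y) ^ r := by
  have hlin : y / r ≤ exp (y / r) := by linarith [add_one_le_exp (y / r)]
  have hpow : (y / r) ^ r ≤ exp y := by
    calc (y / r) ^ r ≤ exp (y / r) ^ r := by gcongr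
      _ = exp y := by rw [← exp_mul, div_mul_cancel₀ y hr.ne']
  rw [exp_neg, ← inv_div, inv_rpow (by positivity)]
  exact inv_anti₀ (by positivity) hpow

lemma exp_neg_mul_rpow_le {k p q x : ℝ} (hk : 0 < k) (hp : 0 < p) (hq : 0 < q) (hx : 0 < x) :
    exp (-(k * x ^ p)) ≤ (q / (p * k)) ^ (q / p) * x ^ (-q) := by
  have hxp : 0 < x ^ p := by positivity
  calc exp (-(k * x ^ p)) ≤ (q / p / (k * x ^ p)) ^ (q / p) :=
        exp_neg_le_div_rpow (by positivity) (by positivity)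
    _ = (q / (p * k)) ^ (q / p) * x ^ (-q) := by
      rw [show q / p / (k * x ^ p) = q / (p * k) * (x ^ p)⁻¹ by field_simp,
        mul_rpow (by positivity) (by positivity), inv_rpow hxp.le, ← rpow_mul hx.le,
        mul_div_cancel₀ q hp.ne', rpow_neg hx.le]

lemma mul_one_add_rpow_mul_sub_le_rpow_sub_rpow {p t τ : ℝ} (hp : 0 ≤ p) (hp1 : p ≤ 1)
    (hτ : 0 ≤ τ) (hτt : τ ≤ t) : p * (1 + t) ^ (p - 1) * (t - τ) ≤ t ^ p - τ ^ p := by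
  have ht : 0 ≤ t := hτ.trans hτt
  -- weighted AM-GM is the tangent-line inequality for the concave function `x ↦ x ^ p` at `t`
  have hamgm : τ ^ p * t ^ (1 - p) ≤ p * τ + (1 - p) * t :=
    geom_mean_le_arith_mean2_weighted hp (by linarith) hτ ht (by ring)
  have htt : t ^ (1 - p) * t ^ p = t := by
    rw [← rpow_add' ht (by norm_num), sub_add_cancel, rpow_one]
  have hdiff : 0 ≤ t ^ p - τ ^ p := by linarith [rpow_le_rpow hτ hτt hp]
  have hcancel : (1 + t) ^ (p - 1) * (1 + t) ^ (1 - p) = 1 := by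
    rw [← rpow_add (by linarith), show p - 1 + (1 - p) = 0 by ring, rpow_zero]
  calc p * (1 + t) ^ (p - 1) * (t - τ) = (1 + t) ^ (p - 1) * (p * (t - τ)) := by ring
    _ ≤ (1 + t) ^ (p - 1) * ((1 + t) ^ (1 - p) * (t ^ p - τ ^ p)) := by
      refine mul_le_mul_of_nonneg_left ?_ (by positivity)
      calc p * (t - τ) ≤ t ^ (1 - p) * (t ^ p - τ ^ p) := by nlinarith
        _ ≤ (1 + t) ^ (1 - p) * (t ^ p - τ ^ p) := by
          gcongr
          linarith
    _ = t ^ p - τ ^ p := by rw [← mul_assoc, hcancel, one_mul]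

lemma exp_neg_mul_rpow_sub_rpow_le {lam p t τ : ℝ} (hlam : 0 ≤ lam) (hp : 0 ≤ p)
    (hp1 : p ≤ 1) (hτ : 0 ≤ τ) (hτt : τ ≤ t) :
    exp (-lam * (t ^ p - τ ^ p)) ≤ exp (-(lam * p * (1 + t) ^ (p - 1)) * (t - τ)) := by
  have := mul_one_add_rpow_mul_sub_le_rpow_sub_rpow hp hp1 hτ hτt
  exact exp_le_exp.2 (by nlinarith)

lemma continuousOn_one_add_rpow (r : ℝ) :
    ContinuousOn (fun τ : ℝ => (1 + τ) ^ r) (Set.Ici 0) := by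
  intro τ hτ
  have : 1 + τ ≠ 0 := by simp only [Set.mem_Ici] at hτ; linarith
  exact ((continuousAt_const.add continuousAt_id).rpow_const (Or.inl this)).continuousWithinAt

lemma intervalIntegrable_one_add_rpow (r : ℝ) {u v : ℝ} (hu : 0 ≤ u) (hv : 0 ≤ v) :
    IntervalIntegrable (fun τ : ℝ => (1 + τ) ^ r) MeasureTheory.volume u v :=
  ((continuousOn_one_add_rpow r).mono fun _ hx => le_trans (le_min hu hv) hx.1).intervalIntegrable

lemma intervalIntegrable_mul_one_add_rpow {f : ℝ → ℝ} (hf : Continuous f) (r : ℝ)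
    {u v : ℝ} (hu : 0 ≤ u) (hv : 0 ≤ v) :
    IntervalIntegrable (fun τ => f τ * (1 + τ) ^ r) MeasureTheory.volume u v :=
  (intervalIntegrable_one_add_rpow r hu hv).continuousOn_mul hf.continuousOn

lemma integral_one_add_rpow_neg_le {m : ℝ} (hm : 1 < m) {s : ℝ} (hs : 0 ≤ s) :
    ∫ τ in (0:ℝ)..s, (1 + τ) ^ (-m) ≤ 1 / (m - 1) := by
  have hshift : ∫ τ in (0:ℝ)..s, (1 + τ) ^ (-m) = ∫ x in (1:ℝ)..(1 + s), x ^ (-m) := by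
    simpa using integral_comp_add_left (fun x : ℝ => x ^ (-m)) 1 (a := 0) (b := s)
  have hnot : (0:ℝ) ∉ Set.uIcc 1 (1 + s) := by
    rw [Set.uIcc_of_le (by linarith)]; simp
  rw [hshift, integral_rpow (Or.inr ⟨by linarith, hnot⟩), one_rpow,
    show -m + 1 = -(m - 1) by ring, div_neg, ← neg_div, neg_sub, sub_div]
  have : 0 < (1 + s) ^ (-(m - 1)) / (m - 1) := by
    have := rpow_pos_of_pos (by linarith : (0:ℝ) < 1 + s) (-(m - 1))
    exact div_pos this (by linarith)
  linarith

lemma integral_exp_neg_mul_sub_le {a : ℝ} (ha : 0 < a) (u v : ℝ) :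
    ∫ τ in u..v, exp (-a * (v - τ)) ≤ 1 / a := by
  have hderiv : ∀ τ ∈ Set.uIcc u v,
      HasDerivAt (fun τ => exp (-a * (v - τ)) / a) (exp (-a * (v - τ))) τ := by
    intro τ _
    refine ((((hasDerivAt_id' τ).const_sub v).const_mul (-a)).exp.div_const a).congr_deriv ?_
    field_simp
  rw [integral_eq_sub_of_hasDerivAt hderiv
    ((by fun_prop : Continuous fun τ => exp (-a * (v - τ))).intervalIntegrable u v)]
  simp only [sub_self, mul_zero, exp_zero]
  linarith [div_pos (exp_pos (-a * (v - u))) ha]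

lemma integral_exp_neg_mul_sub_mul_one_add_rpow_neg_le {a m t : ℝ} (ha : 0 < a) (hm : 1 < m)
    (ht : 0 ≤ t) :
    ∫ τ in (0:ℝ)..t, exp (-a * (t - τ)) * (1 + τ) ^ (-m)
      ≤ exp (-a * (t / 2)) / (m - 1) + (1 + t / 2) ^ (-m) / a := by
  have hkernel : Continuous fun τ => exp (-a * (t - τ)) := by fun_prop
  have ht2 : 0 ≤ t / 2 := by linarith
  rw [← integral_add_adjacent_intervals (intervalIntegrable_mul_one_add_rpow hkernel _ le_rfl ht2)
    (intervalIntegrable_mul_one_add_rpow hkernel _ ht2 ht)]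
  gcongr
  · calc ∫ τ in (0:ℝ)..t / 2, exp (-a * (t - τ)) * (1 + τ) ^ (-m)
        ≤ ∫ τ in (0:ℝ)..t / 2, exp (-a * (t / 2)) * (1 + τ) ^ (-m) := by
          refine integral_mono_on ht2 (intervalIntegrable_mul_one_add_rpow hkernel _ le_rfl ht2)
            (intervalIntegrable_mul_one_add_rpow continuous_const (-m) le_rfl ht2) fun τ hτ => ?_
          refine mul_le_mul_of_nonneg_right (exp_le_exp.2 ?_) (rpow_nonneg (by linarith [hτ.1]) _)
          nlinarith [hτ.2]
      _ = exp (-a * (t / 2)) * ∫ τ in (0:ℝ)..t / 2, (1 + τ) ^ (-m) := integral_const_mul _ _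
      _ ≤ exp (-a * (t / 2)) * (1 / (m - 1)) := by
          gcongr
          exact integral_one_add_rpow_neg_le hm ht2
      _ = exp (-a * (t / 2)) / (m - 1) := by ring
  · calc ∫ τ in t / 2..t, exp (-a * (t - τ)) * (1 + τ) ^ (-m)
        ≤ ∫ τ in t / 2..t, (1 + t / 2) ^ (-m) * exp (-a * (t - τ)) := by
          refine integral_mono_on (by linarith)
            (intervalIntegrable_mul_one_add_rpow hkernel _ ht2 ht)
            ((hkernel.intervalIntegrable _ _).const_mul _) fun τ hτ => ?_
          rw [mul_comm]
          exact mul_le_mul_of_nonneg_right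
            (rpow_le_rpow_of_nonpos (by linarith) (by linarith [hτ.1]) (by linarith))
            (exp_pos _).le
      _ = (1 + t / 2) ^ (-m) * ∫ τ in t / 2..t, exp (-a * (t - τ)) := integral_const_mul _ _
      _ ≤ (1 + t / 2) ^ (-m) * (1 / a) := by
          gcongr
          exact integral_exp_neg_mul_sub_le ha _ _
      _ = (1 + t / 2) ^ (-m) / a := by ring

lemma exp_neg_mul_one_add_rpow_sub_one_mul_le {k p q t : ℝ} (hk : 0 < k) (hp : 0 < p)
    (hp1 : p ≤ 1) (hq : 0 < q) (ht : 0 ≤ t) :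
    exp (-k * (1 + t) ^ (p - 1) * t) ≤ exp k * (q / (p * k)) ^ (q / p) * (1 + t) ^ (-q) := by
  have h1t : 0 < 1 + t := by linarith
  have hsplit : (1 + t) ^ (p - 1) * t = (1 + t) ^ p - (1 + t) ^ (p - 1) := by
    rw [rpow_sub_one h1t.ne']; field_simp; ring
  have hle : (1 + t) ^ (p - 1) ≤ 1 := rpow_le_one_of_one_le_of_nonpos (by linarith) (by linarith)
  calc exp (-k * (1 + t) ^ (p - 1) * t) ≤ exp (k + -(k * (1 + t) ^ p)) := by
        rw [mul_assoc, hsplit]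
        exact exp_le_exp.2 (by nlinarith)
    _ = exp k * exp (-(k * (1 + t) ^ p)) := exp_add _ _
    _ ≤ exp k * ((q / (p * k)) ^ (q / p) * (1 + t) ^ (-q)) := by
        gcongr
        exact exp_neg_mul_rpow_le hk hp hq h1t
    _ = _ := by ring

lemma one_add_half_rpow_neg_le {m t : ℝ} (hm : 0 ≤ m) (ht : 0 ≤ t) :
    (1 + t / 2) ^ (-m) ≤ 2 ^ m * (1 + t) ^ (-m) := by
  have h1t : 0 < 1 + t := by linarith
  calc (1 + t / 2) ^ (-m) ≤ ((1 + t) * 2⁻¹) ^ (-m) :=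
        rpow_le_rpow_of_nonpos (by linarith) (by linarith) (by linarith)
    _ = 2 ^ m * (1 + t) ^ (-m) := by
        rw [mul_rpow h1t.le (by norm_num), inv_rpow (by norm_num), ← rpow_neg (by norm_num),
          neg_neg, mul_comm]

lemma one_add_half_rpow_neg_div_le {c m p t : ℝ} (hc : 0 < c) (hm : 0 ≤ m) (ht : 0 ≤ t) :
    (1 + t / 2) ^ (-m) / (c * (1 + t) ^ (p - 1)) ≤ 2 ^ m / c * (1 + t) ^ (-(m + p - 1)) := by
  have h1t : 0 < 1 + t := by linarith
  calc (1 + t / 2) ^ (-m) / (c * (1 + t) ^ (p - 1))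
      ≤ 2 ^ m * (1 + t) ^ (-m) / (c * (1 + t) ^ (p - 1)) := by
        gcongr
        exact one_add_half_rpow_neg_le hm ht
    _ = 2 ^ m / c * (1 + t) ^ (-(m + p - 1)) := by
        rw [show -(m + p - 1) = -m + -(p - 1) by ring, rpow_add h1t, rpow_neg h1t.le (p - 1)]
        field_simp

theorem exp_power_convolution_decay (p lam m : ℝ)
    (hp : 0 < p) (hp' : p < 1) (hlam : 0 < lam) (hm : 1 < m) :
    ∃ C : ℝ, 0 < C ∧ ∀ t : ℝ, 0 ≤ t →
      (∫ τ in (0 : ℝ)..t, Real.exp (-lam * (t ^ p - τ ^ p)) * (1 + τ) ^ (-m)) ≤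
        C * (1 + t) ^ (-m - p + 1) := by
  set q := m + p - 1
  have hq : 0 < q := by linarith
  set K := (q / (p * (lam * p / 2))) ^ (q / p)
  refine ⟨exp (lam * p / 2) * K / (m - 1) + 2 ^ m / (lam * p), by positivity, fun t ht => ?_⟩
  set a := lam * p * (1 + t) ^ (p - 1)
  have ha : 0 < a := by positivity
  have hfar : exp (-a * (t / 2)) ≤ exp (lam * p / 2) * K * (1 + t) ^ (-q) := by
    convert exp_neg_mul_one_add_rpow_sub_one_mul_le (k := lam * p / 2) (by positivity) hp hp'.le
      hq ht using 2
    ring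
  calc ∫ τ in (0 : ℝ)..t, exp (-lam * (t ^ p - τ ^ p)) * (1 + τ) ^ (-m)
      ≤ ∫ τ in (0 : ℝ)..t, exp (-a * (t - τ)) * (1 + τ) ^ (-m) :=
        integral_mono_on ht
          (intervalIntegrable_mul_one_add_rpow (by fun_prop (disch := exact hp.le)) _ le_rfl ht)
          (intervalIntegrable_mul_one_add_rpow (by fun_prop) _ le_rfl ht) fun τ hτ =>
          mul_le_mul_of_nonneg_right (exp_neg_mul_rpow_sub_rpow_le hlam.le hp.le hp'.le hτ.1 hτ.2)
            (rpow_nonneg (by linarith [hτ.1]) _)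
    _ ≤ exp (-a * (t / 2)) / (m - 1) + (1 + t / 2) ^ (-m) / a :=
        integral_exp_neg_mul_sub_mul_one_add_rpow_neg_le ha hm ht
    _ ≤ exp (lam * p / 2) * K * (1 + t) ^ (-q) / (m - 1)
          + 2 ^ m / (lam * p) * (1 + t) ^ (-q) := by
        gcongr
        exact one_add_half_rpow_neg_div_le (by positivity) (by linarith) ht
    _ = (exp (lam * p / 2) * K / (m - 1) + 2 ^ m / (lam * p)) * (1 + t) ^ (-m - p + 1) := by
        rw [show -m - p + 1 = -q by ring]; ring
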